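/- Let W be the real symmetric (m+n)×(m+n) saddle point matrix W = [[A, B], [Bᵀ, C]], where A ∈ ℝ^{m×m} is symmetric positive definite, B ∈ ℝ^{m×n}, and C ∈ ℝ^{n×n} is symmetric negative semidefinite. If λ_min(A) + λ_min(C) > 0, then ρ(W) = λ_max(W) and λ_max(W) ≠ −λ_min(W). -/

import Mathlib

/-! Let `x = (u, v)` be a unit eigenvector of `W` for `λ_min(W)`. The two block rows of
`W x = λ_min(W) x` turn the Rayleigh bound `zᵀ W z ≤ λ_max(W) ‖z‖²` for the test vector
`z = (‖v‖² u, -‖u‖² v)`, for which `‖z‖² = ‖u‖² ‖v‖²`, into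
`(λ_max(W) + λ_min(W)) ‖u‖² ‖v‖² ≥ ‖v‖² uᵀ A u + ‖u‖² vᵀ C v ≥ (λ_min(A) + λ_min(C)) ‖u‖² ‖v‖²`.
If `u` or `v` vanishes, `x` is an eigenvector of `C` or of `A`, and a test vector supported on the
other block bounds `λ_max(W)` instead. Either way `λ_max(W) + λ_min(W) > 0`, so the largest
eigenvalue dominates in absolute value. -/

open Matrix

/-- A real matrix is negative semidefinite if it is symmetric (Hermitian) and its
quadratic form is nonpositive. -/
def Matrix.NegSemidefinite {k : Type*} [Fintype k] (M : Matrix k k ℝ) : Prop :=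
  M.IsHermitian ∧ ∀ x : k → ℝ, x ⬝ᵥ (M *ᵥ x) ≤ 0

/-- The maximum eigenvalue of a real symmetric matrix. -/
noncomputable def maxEig {k : Type*} [Fintype k] [DecidableEq k]
    {M : Matrix k k ℝ} (hM : M.IsHermitian) : ℝ :=
  ⨆ i, hM.eigenvalues i

/-- The minimum eigenvalue of a real symmetric matrix. -/
noncomputable def minEig {k : Type*} [Fintype k] [DecidableEq k]
    {M : Matrix k k ℝ} (hM : M.IsHermitian) : ℝ :=
  ⨅ i, hM.eigenvalues i

/-- The spectral radius of a real symmetric matrix: the maximum of the absolute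
values of its eigenvalues. -/
noncomputable def specRad {k : Type*} [Fintype k] [DecidableEq k]
    {M : Matrix k k ℝ} (hM : M.IsHermitian) : ℝ :=
  ⨆ i, |hM.eigenvalues i|

lemma Matrix.dotProduct_self_pos_of_ne_zero {R k : Type*} [Fintype k] [Ring R] [LinearOrder R]
    [IsStrictOrderedRing R] {x : k → R} (hx : x ≠ 0) : 0 < x ⬝ᵥ x :=
  (Finset.sum_nonneg fun i _ => mul_self_nonneg (x i)).lt_of_ne
    (Ne.symm (dotProduct_self_eq_zero.not.mpr hx))

namespace Matrix.IsHermitian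

variable {k : Type*} [Fintype k] [DecidableEq k] {M : Matrix k k ℝ} (hM : M.IsHermitian)
include hM

open scoped MatrixOrder

lemma mul_dotProduct_le_dotProduct_mulVec {c : ℝ} (h : ∀ i, c ≤ hM.eigenvalues i) (x : k → ℝ) :
    c * (x ⬝ᵥ x) ≤ x ⬝ᵥ (M *ᵥ x) := by
  have hle : algebraMap ℝ (Matrix k k ℝ) c ≤ M := by
    rw [algebraMap_le_iff_le_spectrum hM.isSelfAdjoint, hM.spectrum_real_eq_range_eigenvalues]
    rintro _ ⟨i, rfl⟩
    exact h i
  simpa [sub_mulVec, Algebra.algebraMap_eq_smul_one, smul_mulVec, dotProduct_smul] using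
    (le_iff.mp hle).dotProduct_mulVec_nonneg x

lemma dotProduct_mulVec_le_mul_dotProduct {c : ℝ} (h : ∀ i, hM.eigenvalues i ≤ c) (x : k → ℝ) :
    x ⬝ᵥ (M *ᵥ x) ≤ c * (x ⬝ᵥ x) := by
  have hle : M ≤ algebraMap ℝ (Matrix k k ℝ) c := by
    rw [le_algebraMap_iff_spectrum_le hM.isSelfAdjoint, hM.spectrum_real_eq_range_eigenvalues]
    rintro _ ⟨i, rfl⟩
    exact h i
  simpa [sub_mulVec, Algebra.algebraMap_eq_smul_one, smul_mulVec, dotProduct_smul] using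
    (le_iff.mp hle).dotProduct_mulVec_nonneg x

end Matrix.IsHermitian

section Eigenvalues

variable {k : Type*} [Fintype k] [DecidableEq k] {M : Matrix k k ℝ} (hM : M.IsHermitian)

lemma minEig_le_eigenvalues (i : k) : minEig hM ≤ hM.eigenvalues i :=
  ciInf_le (Set.finite_range _).bddBelow i

lemma eigenvalues_le_maxEig (i : k) : hM.eigenvalues i ≤ maxEig hM :=
  le_ciSup (Set.finite_range _).bddAbove i

lemma minEig_mul_dotProduct_le (x : k → ℝ) : minEig hM * (x ⬝ᵥ x) ≤ x ⬝ᵥ (M *ᵥ x) :=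
  hM.mul_dotProduct_le_dotProduct_mulVec (minEig_le_eigenvalues hM) x

lemma dotProduct_mulVec_le_maxEig_mul (x : k → ℝ) : x ⬝ᵥ (M *ᵥ x) ≤ maxEig hM * (x ⬝ᵥ x) :=
  hM.dotProduct_mulVec_le_mul_dotProduct (eigenvalues_le_maxEig hM) x

lemma le_maxEig_of_mul_dotProduct_le {c : ℝ} {x : k → ℝ} (hx : x ≠ 0)
    (h : c * (x ⬝ᵥ x) ≤ x ⬝ᵥ (M *ᵥ x)) : c ≤ maxEig hM :=
  le_of_mul_le_mul_right (h.trans (dotProduct_mulVec_le_maxEig_mul hM x))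
    (dotProduct_self_pos_of_ne_zero hx)

lemma exists_mulVec_eq_minEig_smul [Nonempty k] : ∃ x ≠ 0, M *ᵥ x = minEig hM • x := by
  obtain ⟨i, hi⟩ := exists_eq_ciInf_of_finite (f := hM.eigenvalues)
  refine ⟨hM.eigenvectorBasis i, ?_, by rw [hM.mulVec_eigenvectorBasis, hi, minEig]⟩
  simpa using hM.eigenvectorBasis.orthonormal.ne_zero i

lemma specRad_eq_maxEig_of_neg_minEig_lt [Nonempty k] (h : -minEig hM < maxEig hM) :
    specRad hM = maxEig hM := by
  obtain ⟨i, hi⟩ := exists_eq_ciSup_of_finite (f := hM.eigenvalues)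
  refine le_antisymm (ciSup_le fun j => abs_le.mpr ⟨?_, eigenvalues_le_maxEig hM j⟩) ?_
  · linarith [minEig_le_eigenvalues hM j]
  · rw [maxEig, ← hi]
    exact (le_abs_self _).trans
      (le_ciSup (f := fun j => |hM.eigenvalues j|) (Set.finite_range _).bddAbove i)

end Eigenvalues

section Blocks

variable {R m n : Type*} [CommRing R] [Fintype m] [Fintype n]
  (A : Matrix m m R) (B : Matrix m n R) (C : Matrix n n R)

lemma sumElim_dotProduct_fromBlocks_mulVec (u : m → R) (v : n → R) :
    Sum.elim u v ⬝ᵥ (fromBlocks A B Bᵀ C *ᵥ Sum.elim u v) =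
      u ⬝ᵥ (A *ᵥ u) + 2 * u ⬝ᵥ (B *ᵥ v) + v ⬝ᵥ (C *ᵥ v) := by
  simp only [fromBlocks_mulVec, sumElim_dotProduct_sumElim, Sum.elim_comp_inl, Sum.elim_comp_inr,
    dotProduct_add, dotProduct_transpose_mulVec]
  ring

variable {A B C}

lemma dotProduct_eq_of_fromBlocks_mulVec_eq_smul {u : m → R} {v : n → R} {μ : R}
    (h : fromBlocks A B Bᵀ C *ᵥ Sum.elim u v = μ • Sum.elim u v) :
    u ⬝ᵥ (A *ᵥ u) + u ⬝ᵥ (B *ᵥ v) = μ * (u ⬝ᵥ u) ∧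
      u ⬝ᵥ (B *ᵥ v) + v ⬝ᵥ (C *ᵥ v) = μ * (v ⬝ᵥ v) := by
  have hu : A *ᵥ u + B *ᵥ v = μ • u :=
    funext fun i => by simpa [fromBlocks_mulVec] using congrFun h (Sum.inl i)
  have hv : Bᵀ *ᵥ u + C *ᵥ v = μ • v :=
    funext fun j => by simpa [fromBlocks_mulVec] using congrFun h (Sum.inr j)
  constructor
  · rw [← dotProduct_add, hu, dotProduct_smul, smul_eq_mul]
  · rw [← dotProduct_transpose_mulVec, ← dotProduct_add, hv, dotProduct_smul, smul_eq_mul]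

end Blocks

section SaddlePoint

variable {m n : Type*} [Fintype m] [DecidableEq m] [Fintype n] [DecidableEq n]
  {A : Matrix m m ℝ} {B : Matrix m n ℝ} {C : Matrix n n ℝ}
  (hA : A.IsHermitian) (hC : C.IsHermitian) (hW : (fromBlocks A B Bᵀ C).IsHermitian)

lemma minEig_le_maxEig_fromBlocks_left [Nonempty m] : minEig hA ≤ maxEig hW := by
  obtain ⟨i⟩ := ‹Nonempty m›
  refine le_maxEig_of_mul_dotProduct_le hW (x := Sum.elim (Pi.single i 1) 0) ?_ ?_
  · exact fun h => by simpa using congrFun h (Sum.inl i)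
  · simpa [sumElim_dotProduct_fromBlocks_mulVec] using minEig_mul_dotProduct_le hA (Pi.single i 1)

lemma minEig_le_maxEig_fromBlocks_right [Nonempty n] : minEig hC ≤ maxEig hW := by
  obtain ⟨j⟩ := ‹Nonempty n›
  refine le_maxEig_of_mul_dotProduct_le hW (x := Sum.elim 0 (Pi.single j 1)) ?_ ?_
  · exact fun h => by simpa using congrFun h (Sum.inr j)
  · simpa [sumElim_dotProduct_fromBlocks_mulVec] using minEig_mul_dotProduct_le hC (Pi.single j 1)

theorem minEig_add_minEig_le_maxEig_add_minEig_fromBlocks [Nonempty m] [Nonempty n] :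
    minEig hA + minEig hC ≤ maxEig hW + minEig hW := by
  obtain ⟨x, hx0, hx⟩ := exists_mulVec_eq_minEig_smul hW
  obtain ⟨u, v, rfl⟩ : ∃ u v, x = Sum.elim u v := ⟨_, _, (Sum.elim_comp_inl_inr x).symm⟩
  obtain ⟨hu_eq, hv_eq⟩ := dotProduct_eq_of_fromBlocks_mulVec_eq_smul hx
  have ha := minEig_mul_dotProduct_le hA u
  have hc := minEig_mul_dotProduct_le hC v
  by_cases hu : u = 0
  · have hv : v ≠ 0 := by rintro rfl; simp [hu] at hx0
    have : minEig hC ≤ minEig hW := by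
      refine le_of_mul_le_mul_right ?_ (dotProduct_self_pos_of_ne_zero hv)
      simp only [hu, zero_dotProduct, zero_add] at hv_eq
      linarith
    linarith [minEig_le_maxEig_fromBlocks_left hA hW]
  by_cases hv : v = 0
  · have : minEig hA ≤ minEig hW := by
      refine le_of_mul_le_mul_right ?_ (dotProduct_self_pos_of_ne_zero hu)
      simp only [hv, mulVec_zero, dotProduct_zero, add_zero] at hu_eq
      linarith
    linarith [minEig_le_maxEig_fromBlocks_right hC hW]
  have hz := dotProduct_mulVec_le_maxEig_mul hW (Sum.elim ((v ⬝ᵥ v) • u) (-(u ⬝ᵥ u) • v))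
  simp only [sumElim_dotProduct_fromBlocks_mulVec, sumElim_dotProduct_sumElim, mulVec_smul,
    dotProduct_smul, smul_dotProduct, smul_eq_mul] at hz
  set t := u ⬝ᵥ u
  set r := v ⬝ᵥ v
  have ht := dotProduct_self_pos_of_ne_zero hu
  have hr := dotProduct_self_pos_of_ne_zero hv
  refine le_of_mul_le_mul_right ?_ (by positivity : 0 < t * r * (t + r))
  calc (minEig hA + minEig hC) * (t * r * (t + r))
      ≤ (t + r) * (r * (u ⬝ᵥ (A *ᵥ u)) + t * (v ⬝ᵥ (C *ᵥ v))) := by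
        have := mul_le_mul_of_nonneg_left ha (by positivity : 0 ≤ r * (t + r))
        have := mul_le_mul_of_nonneg_left hc (by positivity : 0 ≤ t * (t + r))
        linarith
    _ = r ^ 2 * (u ⬝ᵥ (A *ᵥ u)) - 2 * t * r * (u ⬝ᵥ (B *ᵥ v)) + t ^ 2 * (v ⬝ᵥ (C *ᵥ v))
          + minEig hW * (t * r * (t + r)) := by
        linear_combination (t * r) * hu_eq + (t * r) * hv_eq
    _ ≤ (maxEig hW + minEig hW) * (t * r * (t + r)) := by linarith

end SaddlePoint

theorem stmt_7 (m n : ℕ) (hm : 0 < m) (hn : 0 < n)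
    (A : Matrix (Fin m) (Fin m) ℝ) (B : Matrix (Fin m) (Fin n) ℝ)
    (C : Matrix (Fin n) (Fin n) ℝ)
    (hA : A.PosDef) (hC : C.NegSemidefinite)
    (hW : (fromBlocks A B Bᵀ C).IsHermitian)
    (h : 0 < minEig hA.isHermitian + minEig hC.1) :
    specRad hW = maxEig hW ∧ maxEig hW ≠ -minEig hW := by
  have : Nonempty (Fin m) := ⟨⟨0, hm⟩⟩
  have : Nonempty (Fin n) := ⟨⟨0, hn⟩⟩
  have hlt : -minEig hW < maxEig hW := by
    linarith [minEig_add_minEig_le_maxEig_add_minEig_fromBlocks hA.isHermitian hC.1 hW]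
  exact ⟨specRad_eq_maxEig_of_neg_minEig_lt hW hlt, hlt.ne'⟩
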